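/- For a centered bivariate Gaussian (G_1, G_2), the conditional expectation of G_1 + G_2 given G_1 − G_2 equals [(Var(G_1) − Var(G_2))/Var(G_1 − G_2)] · (G_1 − G_2), assuming Var(G_1 − G_2) > 0. -/

import Mathlib

open MeasureTheory ProbabilityTheory Matrix Real

/-- The standard Gaussian measure on `ι → ℝ` (i.i.d. standard normals). -/
noncomputable def stdGaussian (ι : Type*) [Fintype ι] : Measure (ι → ℝ) :=
  Measure.pi fun _ => gaussianReal 0 1

/-- `μ` is the centered Gaussian measure on `ι → ℝ` with covariance matrix `C`:
it is the law of `A g` for `g` standard Gaussian and any matrix `A` with `A Aᵀ = C`. -/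
def IsCenteredGaussian {ι : Type*} [Fintype ι] (C : Matrix ι ι ℝ)
    (μ : Measure (ι → ℝ)) : Prop :=
  ∃ A : Matrix ι ι ℝ, A * A.transpose = C ∧ μ = (stdGaussian ι).map A.mulVec

/-- Expectation of `f` under `μ`. -/
noncomputable def expec {α : Type*} [MeasurableSpace α] (μ : Measure α) (f : α → ℝ) : ℝ :=
  ∫ x, f x ∂μ

/-- Covariance of `f` and `g` under `μ`. -/
noncomputable def covar {α : Type*} [MeasurableSpace α] (μ : Measure α) (f g : α → ℝ) : ℝ :=
  expec μ (fun x => f x * g x) - expec μ f * expec μ g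

/-- Variance of `f` under `μ`. -/
noncomputable def variance' {α : Type*} [MeasurableSpace α] (μ : Measure α) (f : α → ℝ) : ℝ :=
  covar μ f f

/-!
If `(X, Y)` is Gaussian and `c = Cov(X, Y) / Var X`, the residual `R = Y - c X` is uncorrelated
with `X`, and `(X, R)` is again Gaussian, being a linear image of `(X, Y)`. Hence `R` is
independent of `X`, and `E[Y | X] = c X + E[R]`. For `X = G₁ - G₂`, `Y = G₁ + G₂` all means
vanish and `Cov(X, Y) = Var G₁ - Var G₂`. The means and covariances of linear forms of
`A g` are computed on `EuclideanSpace`, where the covariance of the standard Gaussian is the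
inner product.
-/

open WithLp (toLp ofLp)
open scoped RealInnerProductSpace

section StandardGaussian

variable {ι : Type*} [Fintype ι]

lemma stdGaussian_eq_map_equiv :
    _root_.stdGaussian ι =
      (ProbabilityTheory.stdGaussian (EuclideanSpace ℝ ι)).map (EuclideanSpace.equiv ι ℝ) := by
  rw [← map_pi_eq_stdGaussian, Measure.map_map (by fun_prop) (by fun_prop)]
  exact Measure.map_id.symm

instance isGaussian_stdGaussian_pi : IsGaussian (_root_.stdGaussian ι) := by
  rw [stdGaussian_eq_map_equiv]
  infer_instance

lemma dotProduct_mulVec_ofLp (A : Matrix ι ι ℝ) (v : ι → ℝ) (x : EuclideanSpace ℝ ι) :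
    v ⬝ᵥ A *ᵥ ofLp x = ⟪toLp 2 (v ᵥ* A), x⟫ := by
  rw [EuclideanSpace.inner_eq_star_dotProduct, dotProduct_mulVec, star_trivial, dotProduct_comm]

end StandardGaussian

namespace IsCenteredGaussian

variable {ι : Type*} [Fintype ι] {C : Matrix ι ι ℝ} {μ : Measure (ι → ℝ)}

lemma isSymm (hμ : IsCenteredGaussian C μ) : C.IsSymm := by
  obtain ⟨A, rfl, -⟩ := hμ
  exact isSymm_mul_transpose_self A

lemma isGaussian (hμ : IsCenteredGaussian C μ) : IsGaussian μ := by
  obtain ⟨A, -, rfl⟩ := hμ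
  exact isGaussian_map (Matrix.mulVecLin A).toContinuousLinearMap

lemma exists_eq_map_stdGaussian (hμ : IsCenteredGaussian C μ) : ∃ A : Matrix ι ι ℝ, A * Aᵀ = C ∧
    μ = (ProbabilityTheory.stdGaussian (EuclideanSpace ℝ ι)).map (fun x ↦ A *ᵥ ofLp x) := by
  obtain ⟨A, hA, rfl⟩ := hμ
  refine ⟨A, hA, ?_⟩
  rw [stdGaussian_eq_map_equiv, Measure.map_map (by fun_prop) (by fun_prop)]
  rfl

lemma integral_dotProduct (hμ : IsCenteredGaussian C μ) (v : ι → ℝ) :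
    ∫ z, v ⬝ᵥ z ∂μ = 0 := by
  obtain ⟨A, -, rfl⟩ := hμ.exists_eq_map_stdGaussian
  rw [integral_map (by fun_prop) (by fun_prop)]
  simp_rw [dotProduct_mulVec_ofLp]
  exact integral_strongDual_stdGaussian (innerSL ℝ _)

lemma covariance_dotProduct (hμ : IsCenteredGaussian C μ) (v w : ι → ℝ) :
    cov[(v ⬝ᵥ ·), (w ⬝ᵥ ·); μ] = v ⬝ᵥ C *ᵥ w := by
  obtain ⟨A, rfl, rfl⟩ := hμ.exists_eq_map_stdGaussian
  rw [covariance_map_fun (by fun_prop) (by fun_prop) (by fun_prop)]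
  simp_rw [dotProduct_mulVec_ofLp]
  rw [← covarianceBilin_apply_eq_cov IsGaussian.memLp_two_id, covarianceBilin_stdGaussian,
    innerSL_apply_apply, EuclideanSpace.inner_toLp_toLp, star_trivial, dotProduct_comm,
    ← dotProduct_mulVec, ← mulVec_transpose, mulVec_mulVec]

end IsCenteredGaussian

namespace ProbabilityTheory

variable {Ω : Type*} {mΩ : MeasurableSpace Ω} {P : Measure Ω} {X Y : Ω → ℝ}

lemma IndepFun.condExp_comap_ae_eq_integral [IsFiniteMeasure P] (hXY : IndepFun X Y P)
    (hX : Measurable X) (hY : Measurable Y) :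
    P[Y | MeasurableSpace.comap X (borel ℝ)] =ᵐ[P] fun _ ↦ P[Y] :=
  condExp_indep_eq hY.comap_le hX.comap_le (Measurable.of_comap_le le_rfl).stronglyMeasurable
    ((IndepFun_iff_Indep Y X P).1 hXY.symm)

theorem HasGaussianLaw.condExp_comap_ae_eq_linear (hXY : HasGaussianLaw (fun ω ↦ (X ω, Y ω)) P)
    (hX : Measurable X) (hY : Measurable Y) (hvar : Var[X; P] ≠ 0) :
    P[Y | MeasurableSpace.comap X (borel ℝ)] =ᵐ[P]
      fun ω ↦ P[Y] + cov[X, Y; P] / Var[X; P] * (X ω - P[X]) := by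
  have := hXY.isProbabilityMeasure
  set c := cov[X, Y; P] / Var[X; P]
  set R := fun ω ↦ Y ω - c * X ω
  have hXL2 : MemLp X 2 P := hXY.fst.memLp_two
  have hYL2 : MemLp Y 2 P := hXY.snd.memLp_two
  have hXint : Integrable X P := hXL2.integrable one_le_two
  have hYint : Integrable Y P := hYL2.integrable one_le_two
  have hRint : Integrable R P := hYint.sub (hXint.const_mul c)
  have hXR : HasGaussianLaw (fun ω ↦ (X ω, R ω)) P :=
    hXY.map_fun ((ContinuousLinearMap.fst ℝ ℝ ℝ).prod
      (ContinuousLinearMap.snd ℝ ℝ ℝ - c • ContinuousLinearMap.fst ℝ ℝ ℝ))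
  have hcov : cov[X, R; P] = 0 := by
    rw [covariance_fun_sub_right hXL2 hYL2 (hXL2.const_mul c), covariance_const_mul_right,
      covariance_self hXL2.aemeasurable, div_mul_cancel₀ _ hvar, sub_self]
  have hRcond : P[R | MeasurableSpace.comap X (borel ℝ)] =ᵐ[P] fun _ ↦ P[R] :=
    (hXR.indepFun_of_covariance_eq_zero hcov).condExp_comap_ae_eq_integral hX
      (hY.sub (hX.const_mul c))
  have hXcond : P[fun ω ↦ c * X ω | MeasurableSpace.comap X (borel ℝ)] = fun ω ↦ c * X ω :=
    condExp_of_stronglyMeasurable hX.comap_le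
      ((Measurable.of_comap_le le_rfl).const_mul c).stronglyMeasurable (hXint.const_mul c)
  have hRmean : P[R] = P[Y] - c * P[X] := by
    rw [integral_sub hYint (hXint.const_mul c), integral_const_mul]
  have hYsplit : Y = R + fun ω ↦ c * X ω := by ext ω; simp [R]
  filter_upwards [condExp_add hRint (hXint.const_mul c) (MeasurableSpace.comap X (borel ℝ)),
    hRcond] with ω hadd hR
  nth_rewrite 1 [hYsplit]
  rw [hadd, Pi.add_apply, hR, hXcond, hRmean]
  ring

end ProbabilityTheory

theorem condexp_sum_given_difference (C : Matrix (Fin 2) (Fin 2) ℝ)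
    (μ : Measure (Fin 2 → ℝ)) (hμ : IsCenteredGaussian C μ)
    (hvar : 0 < C 0 0 + C 1 1 - 2 * C 0 1) :
    μ[(fun z => z 0 + z 1) |
        MeasurableSpace.comap (fun z => z 0 - z 1) (borel ℝ)]
      =ᵐ[μ]
    fun z => (C 0 0 - C 1 1) / (C 0 0 + C 1 1 - 2 * C 0 1) * (z 0 - z 1) := by
  have := hμ.isGaussian
  have hdiff : (fun z : Fin 2 → ℝ ↦ z 0 - z 1) = (![1, -1] ⬝ᵥ ·) := by
    ext z; simp [dotProduct, Fin.sum_univ_two, sub_eq_add_neg]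
  have hsum : (fun z : Fin 2 → ℝ ↦ z 0 + z 1) = (![1, 1] ⬝ᵥ ·) := by
    ext z; simp [dotProduct, Fin.sum_univ_two]
  have hC := hμ.isSymm.apply 0 1
  have hvarX : Var[fun z ↦ z 0 - z 1; μ] = C 0 0 + C 1 1 - 2 * C 0 1 := by
    rw [← covariance_self (by fun_prop), hdiff, hμ.covariance_dotProduct]
    simp [dotProduct, mulVec, Fin.sum_univ_two, hC]
    ring
  have hcov : cov[fun z ↦ z 0 - z 1, fun z ↦ z 0 + z 1; μ] = C 0 0 - C 1 1 := by
    rw [hdiff, hsum, hμ.covariance_dotProduct]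
    simp [dotProduct, mulVec, Fin.sum_univ_two, hC]
    ring
  have hlaw : HasGaussianLaw (fun z : Fin 2 → ℝ ↦ (z 0 - z 1, z 0 + z 1)) μ := by
    let d : (Fin 2 → ℝ) →L[ℝ] ℝ := .proj 0 - .proj 1
    let s : (Fin 2 → ℝ) →L[ℝ] ℝ := .proj 0 + .proj 1
    exact IsGaussian.hasGaussianLaw_id.map_fun (d.prod s)
  filter_upwards [hlaw.condExp_comap_ae_eq_linear (by fun_prop) (by fun_prop)
    (hvarX ▸ hvar.ne')] with z hz
  rw [hz, hvarX, hcov, hsum, hdiff, hμ.integral_dotProduct, hμ.integral_dotProduct]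
  ring
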